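/- arXiv:1703.08778 — 3 statements merged into one kernel-verified Lean document; each statement's English description precedes it below -/
import Mathlib

section
/- If A, B, and A ∪ B are nonempty compact convex subsets of a finite-dimensional real vector space V, then A ∩ B is nonempty and the support function of A ∩ B equals the pointwise minimum of the support functions of A and B: h_{A∩B}(ξ) = min{h_A(ξ), h_B(ξ)} for all ξ in V*. -/
/-!
A segment from a point of `A` to a point of `B` lies in the convex set `A ∪ B` and is connected,
so it cannot be split by the two closed sets `A`, `B`: it meets `A ∩ B`. Taking the endpoints to be
maximizers of `ξ` on `A` and on `B`, the meeting point lies in `A ∩ B` and, `ξ` being affine on the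
segment, has `ξ`-value at least `min (h_A ξ) (h_B ξ)`.
-/

noncomputable def suppFn {V : Type*} [NormedAddCommGroup V] [NormedSpace ℝ V]
    (K : Set V) (ξ : V →L[ℝ] ℝ) : ℝ := sSup (ξ '' K)

theorem segment_inter_inter_nonempty {E : Type*} [AddCommGroup E] [Module ℝ E]
    [TopologicalSpace E] [IsTopologicalAddGroup E] [ContinuousSMul ℝ E]
    {A B : Set E} (hAc : IsClosed A) (hBc : IsClosed B) (hUconv : Convex ℝ (A ∪ B))
    {a b : E} (ha : a ∈ A) (hb : b ∈ B) :
    (segment ℝ a b ∩ (A ∩ B)).Nonempty :=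
  isPreconnected_closed_iff.mp (convex_segment a b).isPreconnected A B hAc hBc
    (hUconv.segment_subset (Or.inl ha) (Or.inr hb))
    ⟨a, left_mem_segment ℝ a b, ha⟩ ⟨b, right_mem_segment ℝ a b, hb⟩

section SuppFn

variable {V : Type*} [NormedAddCommGroup V] [NormedSpace ℝ V] {K L : Set V} (ξ : V →L[ℝ] ℝ)

theorem apply_le_suppFn (hK : IsCompact K) {x : V} (hx : x ∈ K) : ξ x ≤ suppFn K ξ :=
  le_csSup (hK.image ξ.continuous).bddAbove (Set.mem_image_of_mem ξ hx)

theorem exists_apply_eq_suppFn (hK : IsCompact K) (hne : K.Nonempty) :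
    ∃ x ∈ K, ξ x = suppFn K ξ :=
  (hK.image ξ.continuous).sSup_mem (hne.image ξ)

theorem suppFn_mono (hL : IsCompact L) (hK : K.Nonempty) (hKL : K ⊆ L) :
    suppFn K ξ ≤ suppFn L ξ :=
  csSup_le_csSup (hL.image ξ.continuous).bddAbove (hK.image ξ) (Set.image_mono hKL)

end SuppFn

theorem support_function_of_inter_general {V : Type*} [NormedAddCommGroup V] [NormedSpace ℝ V]
    (A B : Set V)
    (hA : A.Nonempty) (hAc : IsCompact A)
    (hB : B.Nonempty) (hBc : IsCompact B)
    (hUconv : Convex ℝ (A ∪ B)) :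
    (A ∩ B).Nonempty ∧
      ∀ ξ : V →L[ℝ] ℝ, suppFn (A ∩ B) ξ = min (suppFn A ξ) (suppFn B ξ) := by
  have hABc : IsCompact (A ∩ B) := hAc.inter_right hBc.isClosed
  have hAB : (A ∩ B).Nonempty :=
    (segment_inter_inter_nonempty hAc.isClosed hBc.isClosed hUconv hA.some_mem hB.some_mem).right
  refine ⟨hAB, fun ξ => le_antisymm ?_ ?_⟩
  · exact le_min (suppFn_mono ξ hAc hAB Set.inter_subset_left)
      (suppFn_mono ξ hBc hAB Set.inter_subset_right)
  obtain ⟨a, ha, hξa⟩ := exists_apply_eq_suppFn ξ hAc hA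
  obtain ⟨b, hb, hξb⟩ := exists_apply_eq_suppFn ξ hBc hB
  obtain ⟨x, hx_seg, hx⟩ := segment_inter_inter_nonempty hAc.isClosed hBc.isClosed hUconv ha hb
  calc min (suppFn A ξ) (suppFn B ξ) = min (ξ a) (ξ b) := by rw [hξa, hξb]
    _ ≤ ξ x := (ξ.toLinearMap.concaveOn convex_univ).ge_on_segment trivial trivial hx_seg
    _ ≤ suppFn (A ∩ B) ξ := apply_le_suppFn ξ hABc hx

theorem support_function_of_inter {V : Type*} [NormedAddCommGroup V] [NormedSpace ℝ V]
    [FiniteDimensional ℝ V] (A B : Set V)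
    (hA : A.Nonempty) (hAc : IsCompact A) (hAconv : Convex ℝ A)
    (hB : B.Nonempty) (hBc : IsCompact B) (hBconv : Convex ℝ B)
    (hUconv : Convex ℝ (A ∪ B)) :
    (A ∩ B).Nonempty ∧
      ∀ ξ : V →L[ℝ] ℝ, suppFn (A ∩ B) ξ = min (suppFn A ξ) (suppFn B ξ) :=
  support_function_of_inter_general A B hA hAc hB hBc hUconv
end

section
/- For a 2×2 quaternionic Hermitian matrix A = [[a, q],[q̄, b]] with a, b ∈ ℝ and q ∈ ℍ, define det A = ab − q̄q. Then for any 2×2 quaternionic matrix C, det(C*AC) = det(A) · det(C*C), where C* is the conjugate transpose. -/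
/-!
Both sides of the identity are unchanged when `C` is replaced by `C * T` for a shear
`T = !![1, t; 0, 1]` or the column swap `T = !![0, 1; 1, 0]`, because congruence by such a `T`
preserves the Moore determinant of every Hermitian matrix. Using one of them, `C` becomes lower
triangular, `!![x, 0; z, w]`, and for such `C` a direct computation gives
`moore (Cᴴ * A * C) = moore A * |x|² |w|²`; taking `A = 1` identifies `|x|² |w|²` with `moore (Cᴴ * C)`.
-/

open Matrix

/-- Moore determinant of a 2×2 quaternionic Hermitian matrix. -/
noncomputable def moore (M : Matrix (Fin 2) (Fin 2) (Quaternion ℝ)) : ℝ :=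
  (M 0 0 * M 1 1 - star (M 0 1) * M 0 1).re

open Quaternion

theorem Matrix.conjTranspose_fin_two {α : Type*} [Star α] (a b c d : α) :
    !![a, b; c, d]ᴴ = !![star a, star c; star b, star d] := by
  ext i j
  fin_cases i <;> fin_cases j <;> rfl

theorem Matrix.IsHermitian.eq_fin_two_quaternion {R : Type*} [CommRing R] [NoZeroDivisors R]
    [CharZero R] {M : Matrix (Fin 2) (Fin 2) ℍ[R]} (hM : M.IsHermitian) :
    M = !![((M 0 0).re : ℍ[R]), M 0 1; star (M 0 1), ((M 1 1).re : ℍ[R])] := by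
  conv_lhs => rw [eta_fin_two M]
  rw [← star_eq_self.mp (hM.apply 0 0), ← star_eq_self.mp (hM.apply 1 1), hM.apply 1 0]

theorem isHermitian_fin_two_quaternion {R : Type*} [CommRing R] (a b : R) (q : ℍ[R]) :
    !![(a : ℍ[R]), q; star q, (b : ℍ[R])].IsHermitian := by
  simp [IsHermitian, conjTranspose_fin_two]

theorem moore_fin_two (a b c d : ℍ[ℝ]) : moore !![a, b; c, d] = (a * d - star b * b).re := rfl

theorem moore_one : moore 1 = 1 := by
  simp [moore]

def PreservesMoore (T : Matrix (Fin 2) (Fin 2) ℍ[ℝ]) : Prop :=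
  ∀ M : Matrix (Fin 2) (Fin 2) ℍ[ℝ], M.IsHermitian → moore (Tᴴ * M * T) = moore M

theorem preservesMoore_shear (t : ℍ[ℝ]) : PreservesMoore !![1, t; 0, 1] := by
  intro M hM
  rw [hM.eq_fin_two_quaternion]
  simp only [conjTranspose_fin_two, mul_fin_two, moore_fin_two, star_one, star_zero, one_mul,
    mul_one, zero_mul, mul_zero, add_zero]
  simp only [re_sub, re_add, re_mul, imI_add, imI_mul, imJ_add, imJ_mul, imK_add, imK_mul,
    re_star, imI_star, imJ_star, imK_star, re_coe, imI_coe, imJ_coe, imK_coe]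
  ring

theorem preservesMoore_swap : PreservesMoore !![0, 1; 1, 0] := by
  intro M hM
  rw [hM.eq_fin_two_quaternion]
  simp [conjTranspose_fin_two, moore_fin_two, self_mul_star, star_mul_self, mul_comm]

theorem PreservesMoore.moore_congr_mul_right {T : Matrix (Fin 2) (Fin 2) ℍ[ℝ]}
    (hT : PreservesMoore T) {M : Matrix (Fin 2) (Fin 2) ℍ[ℝ]} (hM : M.IsHermitian)
    (C : Matrix (Fin 2) (Fin 2) ℍ[ℝ]) :
    moore ((C * T)ᴴ * M * (C * T)) = moore (Cᴴ * M * C) := by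
  rw [conjTranspose_mul, ← hT _ (isHermitian_conjTranspose_mul_mul C hM)]
  simp only [Matrix.mul_assoc]

theorem exists_preservesMoore_mul_eq_lowerTriangular (C : Matrix (Fin 2) (Fin 2) ℍ[ℝ]) :
    ∃ T, PreservesMoore T ∧ ∃ x z w, C * T = !![x, 0; z, w] := by
  by_cases hx : C 0 0 = 0
  · refine ⟨_, preservesMoore_swap, C 0 1, C 1 1, C 1 0, ?_⟩
    rw [eta_fin_two C, hx]
    simp
  · refine ⟨_, preservesMoore_shear (-(C 0 0)⁻¹ * C 0 1), C 0 0, C 1 0,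
      -(C 1 0 * (C 0 0)⁻¹ * C 0 1) + C 1 1, ?_⟩
    conv_lhs => rw [eta_fin_two C]
    simp [← mul_assoc, hx]

theorem moore_conjTranspose_mul_mul_lowerTriangular {A : Matrix (Fin 2) (Fin 2) ℍ[ℝ]}
    (hA : A.IsHermitian) (x z w : ℍ[ℝ]) :
    moore (!![x, 0; z, w]ᴴ * A * !![x, 0; z, w]) = moore A * (normSq x * normSq w) := by
  rw [hA.eq_fin_two_quaternion]
  simp only [conjTranspose_fin_two, mul_fin_two, moore_fin_two, star_zero, zero_mul, mul_zero,
    zero_add, normSq_def']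
  simp only [re_sub, re_add, re_mul, imI_add, imI_mul, imJ_add, imJ_mul, imK_add, imK_mul,
    re_star, imI_star, imJ_star, imK_star, re_coe, imI_coe, imJ_coe, imK_coe]
  ring

theorem moore_conjTranspose_mul_mul {A : Matrix (Fin 2) (Fin 2) ℍ[ℝ]} (hA : A.IsHermitian)
    (C : Matrix (Fin 2) (Fin 2) ℍ[ℝ]) :
    moore (Cᴴ * A * C) = moore A * moore (Cᴴ * C) := by
  obtain ⟨T, hT, x, z, w, hCT⟩ := exists_preservesMoore_mul_eq_lowerTriangular C
  have hCAC := hT.moore_congr_mul_right hA C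
  have hCC := hT.moore_congr_mul_right isHermitian_one C
  rw [hCT, moore_conjTranspose_mul_mul_lowerTriangular hA] at hCAC
  rw [hCT, moore_conjTranspose_mul_mul_lowerTriangular isHermitian_one, moore_one, one_mul,
    Matrix.mul_one] at hCC
  rw [← hCAC, ← hCC]

theorem moore_det_weak_multiplicativity (a b : ℝ) (q : Quaternion ℝ)
    (C : Matrix (Fin 2) (Fin 2) (Quaternion ℝ)) :
    moore (Cᴴ * !![(a : Quaternion ℝ), q; star q, (b : Quaternion ℝ)] * C) =
      moore !![(a : Quaternion ℝ), q; star q, (b : Quaternion ℝ)] * moore (Cᴴ * C) :=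
  moore_conjTranspose_mul_mul (isHermitian_fin_two_quaternion a b q) C
end

section
/- The pointwise minimum operation preserves the valuation identity for support functions: if A, B, and A ∪ B are nonempty compact convex subsets of ℝ^n, then max{h_A, h_B} is a convex (indeed sublinear) function and min{h_A, h_B} is convex, being the support function of A ∩ B. -/
noncomputable def suppFnE {n : ℕ} (K : Set (EuclideanSpace ℝ (Fin n)))
    (x : EuclideanSpace ℝ (Fin n)) : ℝ :=
  sSup ((fun y => (inner ℝ x y : ℝ)) '' K)

/-!
A support function is a supremum of linear functionals, hence convex and positively homogeneous,
and so is the maximum of two of them. For the minimum, take `a ∈ A` and `b ∈ B` maximising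
`⟪x, ·⟫`. As `A ∪ B` is convex and `A`, `B` are closed, the connected segment `[a, b] ⊆ A ∪ B`
cannot be split by `A` and `B`, so it meets `A ∩ B` at some `z`; a linear function on a segment is
at least its smaller end value, so `min (h_A x) (h_B x) ≤ ⟪x, z⟫ ≤ h_{A ∩ B} x`. The reverse
inequality holds because `A ∩ B` lies in both sets.
-/

open Set
open scoped Pointwise

theorem Convex.segment_inter_nonempty_of_union {E : Type*} [AddCommGroup E] [Module ℝ E]
    [TopologicalSpace E] [ContinuousAdd E] [ContinuousSMul ℝ E] {A B : Set E}
    (hA : IsClosed A) (hB : IsClosed B) (hAB : Convex ℝ (A ∪ B)) {a b : E} (ha : a ∈ A)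
    (hb : b ∈ B) : (segment ℝ a b ∩ (A ∩ B)).Nonempty :=
  isPreconnected_closed_iff.mp (convex_segment a b).isPreconnected A B hA hB
    (hAB.segment_subset (.inl ha) (.inr hb)) ⟨a, left_mem_segment ℝ a b, ha⟩
    ⟨b, right_mem_segment ℝ a b, hb⟩

theorem IsCompact.image_inner {E : Type*} [SeminormedAddCommGroup E] [InnerProductSpace ℝ E]
    {K : Set E} (hK : IsCompact K) (x : E) : IsCompact ((fun y => (inner ℝ x y : ℝ)) '' K) :=
  hK.image (by fun_prop)

section SupportFunction

variable {n : ℕ} {K : Set (EuclideanSpace ℝ (Fin n))}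

theorem exists_inner_eq_suppFnE (hK : K.Nonempty) (hKc : IsCompact K)
    (x : EuclideanSpace ℝ (Fin n)) : ∃ y ∈ K, inner ℝ x y = suppFnE K x :=
  (hKc.image_inner x).sSup_mem (hK.image _)

theorem inner_le_suppFnE (hK : IsCompact K) {y : EuclideanSpace ℝ (Fin n)} (hy : y ∈ K)
    (x : EuclideanSpace ℝ (Fin n)) : inner ℝ x y ≤ suppFnE K x :=
  le_csSup (hK.image_inner x).bddAbove ⟨y, hy, rfl⟩

theorem suppFnE_le_of_forall_inner_le (hK : K.Nonempty) {x : EuclideanSpace ℝ (Fin n)} {c : ℝ}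
    (h : ∀ y ∈ K, inner ℝ x y ≤ c) : suppFnE K x ≤ c :=
  csSup_le (hK.image _) (forall_mem_image.2 h)

theorem suppFnE_smul {c : ℝ} (hc : 0 ≤ c) (x : EuclideanSpace ℝ (Fin n)) :
    suppFnE K (c • x) = c * suppFnE K x := by
  have : (fun y => inner ℝ (c • x) y) '' K = c • (fun y => (inner ℝ x y : ℝ)) '' K := by
    simp only [real_inner_smul_left, ← smul_eq_mul, ← image_smul, image_image]
  rw [suppFnE, this, Real.sSup_smul_of_nonneg hc, smul_eq_mul, suppFnE]

theorem convexOn_suppFnE (hK : K.Nonempty) (hKc : IsCompact K) :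
    ConvexOn ℝ univ (suppFnE K) := by
  refine ⟨convex_univ, fun x _ y _ a b ha hb _ => suppFnE_le_of_forall_inner_le hK fun z hz => ?_⟩
  rw [inner_add_left, real_inner_smul_left, real_inner_smul_left]
  exact add_le_add (mul_le_mul_of_nonneg_left (inner_le_suppFnE hKc hz x) ha)
    (mul_le_mul_of_nonneg_left (inner_le_suppFnE hKc hz y) hb)

theorem suppFnE_inter {A B : Set (EuclideanSpace ℝ (Fin n))} (hA : A.Nonempty)
    (hAc : IsCompact A) (hB : B.Nonempty) (hBc : IsCompact B) (hAB : Convex ℝ (A ∪ B))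
    (x : EuclideanSpace ℝ (Fin n)) :
    suppFnE (A ∩ B) x = min (suppFnE A x) (suppFnE B x) := by
  obtain ⟨a, ha, hxa⟩ := exists_inner_eq_suppFnE hA hAc x
  obtain ⟨b, hb, hxb⟩ := exists_inner_eq_suppFnE hB hBc x
  obtain ⟨z, hz, hzAB⟩ := hAB.segment_inter_nonempty_of_union hAc.isClosed hBc.isClosed ha hb
  apply le_antisymm
  · exact suppFnE_le_of_forall_inner_le ⟨z, hzAB⟩ fun y hy =>
      le_min (inner_le_suppFnE hAc hy.1 x) (inner_le_suppFnE hBc hy.2 x)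
  · calc min (suppFnE A x) (suppFnE B x) = min (innerSL ℝ x a) (innerSL ℝ x b) := by
          rw [innerSL_apply_apply, innerSL_apply_apply, hxa, hxb]
      _ ≤ innerSL ℝ x z :=
          ((innerSL ℝ x).toLinearMap.concaveOn convex_univ).min_le_of_mem_segment
            (mem_univ a) (mem_univ b) hz
      _ ≤ suppFnE (A ∩ B) x := inner_le_suppFnE (hAc.inter_right hBc.isClosed) hzAB x

end SupportFunction

theorem max_min_of_support_functions_general {n : ℕ} (A B : Set (EuclideanSpace ℝ (Fin n)))
    (hA : A.Nonempty) (hAc : IsCompact A)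
    (hB : B.Nonempty) (hBc : IsCompact B)
    (hUconv : Convex ℝ (A ∪ B)) :
    -- max of the support functions is convex and sublinear (positively 1-homogeneous)
    ConvexOn ℝ Set.univ (fun x => max (suppFnE A x) (suppFnE B x)) ∧
    (∀ (c : ℝ) (x : EuclideanSpace ℝ (Fin n)), 0 < c →
      max (suppFnE A (c • x)) (suppFnE B (c • x)) =
        c * max (suppFnE A x) (suppFnE B x)) ∧
    -- min of the support functions is convex, being the support function of A ∩ B
    ConvexOn ℝ Set.univ (fun x => min (suppFnE A x) (suppFnE B x)) ∧
    (∀ x, min (suppFnE A x) (suppFnE B x) = suppFnE (A ∩ B) x) := by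
  have hmin : ∀ x, min (suppFnE A x) (suppFnE B x) = suppFnE (A ∩ B) x := fun x =>
    (suppFnE_inter hA hAc hB hBc hUconv x).symm
  have hAB : (A ∩ B).Nonempty :=
    (hUconv.segment_inter_nonempty_of_union hAc.isClosed hBc.isClosed hA.some_mem
      hB.some_mem).mono inter_subset_right
  refine ⟨(convexOn_suppFnE hA hAc).sup (convexOn_suppFnE hB hBc), ?_, ?_, hmin⟩
  · intro c x hc
    rw [suppFnE_smul hc.le, suppFnE_smul hc.le, mul_max_of_nonneg _ _ hc.le]
  · simpa only [hmin] using convexOn_suppFnE hAB (hAc.inter_right hBc.isClosed)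

theorem max_min_of_support_functions {n : ℕ} (A B : Set (EuclideanSpace ℝ (Fin n)))
    (hA : A.Nonempty) (hAc : IsCompact A) (hAconv : Convex ℝ A)
    (hB : B.Nonempty) (hBc : IsCompact B) (hBconv : Convex ℝ B)
    (hUconv : Convex ℝ (A ∪ B)) :
    -- max of the support functions is convex and sublinear (positively 1-homogeneous)
    ConvexOn ℝ Set.univ (fun x => max (suppFnE A x) (suppFnE B x)) ∧
    (∀ (c : ℝ) (x : EuclideanSpace ℝ (Fin n)), 0 < c →
      max (suppFnE A (c • x)) (suppFnE B (c • x)) =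
        c * max (suppFnE A x) (suppFnE B x)) ∧
    -- min of the support functions is convex, being the support function of A ∩ B
    ConvexOn ℝ Set.univ (fun x => min (suppFnE A x) (suppFnE B x)) ∧
    (∀ x, min (suppFnE A x) (suppFnE B x) = suppFnE (A ∩ B) x) :=
  max_min_of_support_functions_general A B hA hAc hB hBc hUconv
end
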